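/- arXiv:1107.3419 — 7 statements merged into one kernel-verified Lean document; each statement's English description precedes it below -/
import Mathlib

section
/- Let (π̂_{s,t})_{s≤t} be a deterministic flow of partitions. Then for every s ∈ ℝ and every n ∈ ℕ there exists ε > 0 such that π̂^{[n]}_{r,t} = O_[n] for all r, t with s ≤ r ≤ t < s + ε, and there exists ε' > 0 such that π̂^{[n]}_{r,t} = O_[n] for all r, t with s − ε' < r ≤ t < s. -/
/-!  Partitions of `ℕ` as equivalence relations (setoids), blocks ordered by
their least element (0-indexed), and the coagulation operator. -/

/-- The least element of the block of `a` in the partition `π` of `ℕ`. -/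
noncomputable def leaderOf (π : Setoid ℕ) (a : ℕ) : ℕ := sInf {k | π.r a k}

/-- The (0-based) index of the block of `a` among the blocks of `π`, the blocks
being ordered by increasing least element. -/
noncomputable def blockIdx (π : Setoid ℕ) (a : ℕ) : ℕ :=
  Set.ncard {l | l < leaderOf π a ∧ leaderOf π l = l}

/-- The `i`-th block (0-based) of the partition `π`; it is empty when `π` has
fewer than `i + 1` blocks. -/
def block (π : Setoid ℕ) (i : ℕ) : Set ℕ := {a | blockIdx π a = i}

/-- The coagulation `Coag π σ` of the partitions `π` and `σ` : two integers are
related iff the indices of their `π`-blocks lie in a common block of `σ`;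
equivalently, the `i`-th block of `Coag π σ` is `⋃_{j ∈ σ(i)} π(j)`. -/
noncomputable def Coag (π σ : Setoid ℕ) : Setoid ℕ := Setoid.comap (blockIdx π) σ

/-- The partition `O_[∞]` of `ℕ` into singletons. -/
def eqSetoid : Setoid ℕ := ⟨Eq, ⟨fun _ => rfl, fun h => h.symm, fun h₁ h₂ => h₁.trans h₂⟩⟩

/-- `restTrivial π n` says that the restriction `π^{[n]}` of `π` to the first
`n` integers is the partition `O_[n]` into singletons. -/
def restTrivial (π : Setoid ℕ) (n : ℕ) : Prop := ∀ i < n, ∀ j < n, π.r i j → i = j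

/-- A deterministic flow of partitions `(π̂_{s,t})_{s ≤ t}`. -/
structure IsDetFlow (π : ∀ s t : ℝ, s ≤ t → Setoid ℕ) : Prop where
  /-- cocycle property -/
  cocycle : ∀ (r s t : ℝ) (h₁ : r < s) (h₂ : s < t),
    π r t (h₁.le.trans h₂.le) = Coag (π s t h₂.le) (π r s h₁.le)
  /-- `π̂_{s,s} = O_[∞]` -/
  diag : ∀ s : ℝ, π s s le_rfl = eqSetoid
  /-- right regularity -/
  right_reg : ∀ (s : ℝ) (n : ℕ), ∃ ε > 0, ∀ (t : ℝ) (h : s ≤ t), t < s + ε →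
    restTrivial (π s t h) n
  /-- left regularity -/
  left_reg : ∀ (s : ℝ) (n : ℕ), ∃ ε > 0, ∀ r : ℝ, s - ε < r → r < s →
    ∃ δ > 0, δ < s - r ∧ ∀ (t : ℝ) (h : r ≤ t), s - δ < t → t < s → restTrivial (π r t h) n

lemma leaderOf_congr (π : Setoid ℕ) {a b : ℕ} (h : π.r a b) : leaderOf π a = leaderOf π b := by
  unfold leaderOf
  congr 1
  ext k
  exact ⟨fun hk => π.trans (π.symm h) hk, fun hk => π.trans h hk⟩

lemma blockIdx_congr (π : Setoid ℕ) {a b : ℕ} (h : π.r a b) : blockIdx π a = blockIdx π b := by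
  unfold blockIdx; rw [leaderOf_congr π h]

lemma coag_rel (π σ : Setoid ℕ) (a b : ℕ) :
    (Coag π σ).r a b ↔ σ.r (blockIdx π a) (blockIdx π b) := Iff.rfl

lemma restTrivial_of_coag {π σ : Setoid ℕ} {n : ℕ} (h : restTrivial (Coag π σ) n) :
    restTrivial π n := fun i hi j hj hij =>
  h i hi j hj (by rw [coag_rel, blockIdx_congr π hij])

lemma leaderOf_eq {π : Setoid ℕ} {n : ℕ} (h : restTrivial π n) {a : ℕ} (ha : a < n) :
    leaderOf π a = a := by
  have hmem : a ∈ {k | π.r a k} := π.refl a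
  refine le_antisymm (Nat.sInf_le hmem) (le_csInf ⟨a, hmem⟩ ?_)
  intro k hk
  by_contra hlt
  push_neg at hlt
  exact absurd (h a ha k (hlt.trans ha) hk) (by omega)

lemma blockIdx_eq {π : Setoid ℕ} {n : ℕ} (h : restTrivial π n) {a : ℕ} (ha : a < n) :
    blockIdx π a = a := by
  unfold blockIdx
  rw [leaderOf_eq h ha]
  have : {l | l < a ∧ leaderOf π l = l} = Set.Iio a := by
    ext l
    simp only [Set.mem_setOf_eq, Set.mem_Iio]
    exact ⟨fun h' => h'.1, fun h' => ⟨h', leaderOf_eq h (h'.trans ha)⟩⟩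
  rw [this, show (Set.Iio a) = ↑(Finset.Iio a) by simp, Set.ncard_coe_finset]
  simp

lemma restTrivial_snd_of_coag {π σ : Setoid ℕ} {n : ℕ} (hπ : restTrivial π n)
    (h : restTrivial (Coag π σ) n) : restTrivial σ n := fun i hi j hj hij =>
  h i hi j hj (by rw [coag_rel, blockIdx_eq hπ hi, blockIdx_eq hπ hj]; exact hij)

lemma restTrivial_eqSetoid (n : ℕ) : restTrivial eqSetoid n := fun i _ j _ h => h

/-- Lemma: no accumulation of mergers near any time.
For a deterministic flow of partitions, for every `s` and `n` there is `ε > 0`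
such that `π̂^{[n]}_{r,t} = O_[n]` whenever `s ≤ r ≤ t < s + ε`, and there is
`ε' > 0` such that `π̂^{[n]}_{r,t} = O_[n]` whenever `s - ε' < r ≤ t < s`. -/
theorem stmt1 (π : ∀ s t : ℝ, s ≤ t → Setoid ℕ) (hπ : IsDetFlow π) (s : ℝ) (n : ℕ) :
    (∃ ε > 0, ∀ (r t : ℝ) (h : r ≤ t), s ≤ r → t < s + ε → restTrivial (π r t h) n) ∧
    (∃ ε' > 0, ∀ (r t : ℝ) (h : r ≤ t), s - ε' < r → t < s → restTrivial (π r t h) n) := by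
  constructor
  · obtain ⟨ε, hε, hspec⟩ := hπ.right_reg s n
    refine ⟨ε, hε, fun r t h hsr ht => ?_⟩
    rcases eq_or_lt_of_le h with hrt | hrt
    · subst hrt
      have : π r r h = eqSetoid := hπ.diag r
      rw [this]; exact restTrivial_eqSetoid n
    rcases eq_or_lt_of_le hsr with hsr' | hsr'
    · subst hsr'
      exact hspec t h ht
    · have h1 : restTrivial (π s t (hsr'.le.trans hrt.le)) n :=
        hspec t (hsr'.le.trans hrt.le) ht
      rw [hπ.cocycle s r t hsr' hrt] at h1
      exact restTrivial_of_coag h1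
  · obtain ⟨ε', hε', hspec⟩ := hπ.left_reg s n
    refine ⟨ε', hε', fun r t h hr ht => ?_⟩
    rcases eq_or_lt_of_le h with hrt | hrt
    · subst hrt
      have : π r r h = eqSetoid := hπ.diag r
      rw [this]; exact restTrivial_eqSetoid n
    · have hrs : r < s := hrt.trans ht
      obtain ⟨δ, hδ, hδs, hδspec⟩ := hspec r hr hrs
      obtain ⟨δt, hδt, hδts, hδtspec⟩ := hspec t (hr.trans_le h) ht
      set m : ℝ := max t (max (s - δ) (s - δt)) with hm
      have hms : m < s := by
        apply max_lt ht (max_lt (by linarith) (by linarith))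
      set t' : ℝ := (m + s) / 2 with ht'
      have hmt' : m < t' := by rw [ht']; linarith
      have ht's : t' < s := by rw [ht']; linarith
      have htt' : t < t' := lt_of_le_of_lt (le_max_left _ _) hmt'
      have hδt' : s - δ < t' :=
        lt_of_le_of_lt ((le_max_left _ _).trans (le_max_right _ _)) hmt'
      have hδtt' : s - δt < t' :=
        lt_of_le_of_lt ((le_max_right _ _).trans (le_max_right _ _)) hmt'
      have h1 : restTrivial (π r t' (hrt.le.trans htt'.le)) n :=
        hδspec t' (hrt.le.trans htt'.le) hδt' ht's
      have h2 : restTrivial (π t t' htt'.le) n := hδtspec t' htt'.le hδtt' ht's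
      rw [hπ.cocycle r t t' hrt htt'] at h1
      exact restTrivial_snd_of_coag h2 h1
end

section
/- Let π be a partition of ℕ each of whose blocks has an asymptotic frequency, and assume ∑_{l≥1} |π(l)| = 1. Then for every partition σ of ℕ and every i ≥ 1, the block Coag(π,σ)(i) has an asymptotic frequency, and |Coag(π,σ)(i)| = ∑_{j∈σ(i)} |π(j)|. -/
/-- `A ⊆ ℕ` has asymptotic frequency `l`, i.e.
`#(A ∩ {0,…,m-1}) / m → l` as `m → ∞`. -/
def HasFreq (A : Set ℕ) (l : ℝ) : Prop :=
  Filter.Tendsto (fun m : ℕ => ((A ∩ Set.Iio m).ncard : ℝ) / m) Filter.atTop (nhds l)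

def RestrictedGrowth (h : ℕ → ℕ) : Prop := ∀ a, ∀ j < h a, ∃ b < a, h b = j

theorem RestrictedGrowth.comp {g h : ℕ → ℕ} (hg : RestrictedGrowth g) (hh : RestrictedGrowth h) :
    RestrictedGrowth (g ∘ h) := fun a j hj => by
  obtain ⟨k, hk, rfl⟩ := hg (h a) j hj
  obtain ⟨b, hb, rfl⟩ := hh a k hk
  exact ⟨b, hb, rfl⟩

lemma RestrictedGrowth.le_of_forall_lt_eq {h h' : ℕ → ℕ} (hh' : RestrictedGrowth h')
    (hker : ∀ b c, h b = h c → h' b = h' c) {a : ℕ} (heq : ∀ b < a, h b = h' b) :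
    h' a ≤ h a := by
  by_contra! hlt
  obtain ⟨b, hba, hb⟩ := hh' a (h a) hlt
  have := hker b a ((heq b hba).trans hb)
  omega

theorem RestrictedGrowth.eq_of_eq_iff {h h' : ℕ → ℕ} (hh : RestrictedGrowth h)
    (hh' : RestrictedGrowth h') (hker : ∀ a b, h a = h b ↔ h' a = h' b) : h = h' := by
  funext a
  induction a using Nat.strong_induction_on with
  | _ a ih =>
    exact le_antisymm (hh.le_of_forall_lt_eq (fun b c => (hker b c).2) fun b hb => (ih b hb).symm)
      (hh'.le_of_forall_lt_eq (fun b c => (hker b c).1) ih)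

section Partition

variable (π : Setoid ℕ)

def IsLeader (a : ℕ) : Prop := leaderOf π a = a

noncomputable instance : DecidablePred (IsLeader π) := Classical.decPred _

lemma rel_leaderOf (a : ℕ) : π a (leaderOf π a) :=
  Nat.sInf_mem (⟨a, π.refl' a⟩ : Set.Nonempty {k | π a k})

lemma leaderOf_le (a : ℕ) : leaderOf π a ≤ a := Nat.sInf_le (π.refl' a)

lemma leaderOf_eq_leaderOf_iff {a b : ℕ} : leaderOf π a = leaderOf π b ↔ π a b := by
  refine ⟨fun h => π.trans' (rel_leaderOf π a) (h ▸ π.symm' (rel_leaderOf π b)), fun h => ?_⟩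
  unfold leaderOf
  congr 1
  ext k
  exact ⟨π.trans' (π.symm' h), π.trans' h⟩

lemma isLeader_leaderOf (a : ℕ) : IsLeader π (leaderOf π a) :=
  (leaderOf_eq_leaderOf_iff π).2 (π.symm' (rel_leaderOf π a))

lemma blockIdx_eq_count (a : ℕ) : blockIdx π a = Nat.count (IsLeader π) (leaderOf π a) := by
  rw [Nat.count_eq_card_filter_range, blockIdx, ← Set.ncard_coe_finset]
  congr 1
  ext l
  rw [Finset.mem_coe, Finset.mem_filter, Finset.mem_range]
  rfl

lemma IsLeader.blockIdx_eq {b : ℕ} (hb : IsLeader π b) :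
    blockIdx π b = Nat.count (IsLeader π) b := by
  rw [blockIdx_eq_count, hb]

lemma blockIdx_eq_blockIdx_iff {a b : ℕ} : blockIdx π a = blockIdx π b ↔ π a b := by
  rw [blockIdx_eq_count, blockIdx_eq_count, ← leaderOf_eq_leaderOf_iff]
  exact ⟨Nat.count_injective (isLeader_leaderOf π a) (isLeader_leaderOf π b), congrArg _⟩

lemma restrictedGrowth_blockIdx : RestrictedGrowth (blockIdx π) := by
  intro a j hj
  rw [blockIdx_eq_count] at hj
  have hcard (hf : (Set.ofPred (IsLeader π)).Finite) : j < hf.toFinset.card :=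
    hj.trans_le (Nat.count_le_card hf _)
  refine ⟨Nat.nth (IsLeader π) j, (Nat.nth_lt_of_lt_count hj).trans_le (leaderOf_le π a), ?_⟩
  rw [(Nat.nth_mem j hcard).blockIdx_eq, Nat.count_nth hcard]

theorem blockIdx_coag (σ : Setoid ℕ) : blockIdx (Coag π σ) = blockIdx σ ∘ blockIdx π :=
  (restrictedGrowth_blockIdx _).eq_of_eq_iff
    ((restrictedGrowth_blockIdx σ).comp (restrictedGrowth_blockIdx π)) fun a b => by
      rw [blockIdx_eq_blockIdx_iff, Function.comp_apply, Function.comp_apply,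
        blockIdx_eq_blockIdx_iff]
      rfl

end Partition

open Filter Set Topology

lemma ncard_preimage_finset_inter_Iio (g : ℕ → ℕ) (F : Finset ℕ) (m : ℕ) :
    (g ⁻¹' ↑F ∩ Iio m).ncard = ∑ j ∈ F, (g ⁻¹' {j} ∩ Iio m).ncard := by
  classical
  have hcoe (T : Finset ℕ) : g ⁻¹' ↑T ∩ Iio m = ↑((Finset.range m).filter (g · ∈ T)) := by
    ext; simp [and_comm]
  simp_rw [← Finset.coe_singleton, hcoe, Set.ncard_coe_finset, Finset.mem_singleton]
  rw [Finset.card_eq_sum_card_fiberwise (s := (Finset.range m).filter (g · ∈ F)) (t := F)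
    fun a ha => Finset.mem_coe.2 (Finset.mem_filter.1 ha).2]
  refine Finset.sum_congr rfl fun j hj => congrArg _ ?_
  rw [Finset.filter_filter]
  exact Finset.filter_congr fun a _ => and_iff_right_of_imp fun h => h ▸ hj

noncomputable def density (A : Set ℕ) (m : ℕ) : ℝ := ((A ∩ Iio m).ncard : ℝ) / m

lemma hasFreq_iff_tendsto_density {A : Set ℕ} {l : ℝ} :
    HasFreq A l ↔ Tendsto (density A) atTop (𝓝 l) := Iff.rfl

lemma density_mono {A B : Set ℕ} (hAB : A ⊆ B) (m : ℕ) : density A m ≤ density B m := by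
  refine div_le_div_of_nonneg_right ?_ m.cast_nonneg
  exact_mod_cast ncard_le_ncard (inter_subset_inter_left _ hAB) ((finite_Iio m).inter_of_right B)

lemma density_add_density_compl (A : Set ℕ) {m : ℕ} (hm : m ≠ 0) :
    density A m + density Aᶜ m = 1 := by
  have hsplit : (A ∩ Iio m).ncard + (Aᶜ ∩ Iio m).ncard = m := by
    rw [inter_comm A, inter_comm Aᶜ, ← sdiff_eq,
      ncard_inter_add_ncard_sdiff_eq_ncard _ _ (finite_Iio m), ncard_Iio_nat]
  rw [density, density, ← add_div, div_eq_one_iff_eq (Nat.cast_ne_zero.2 hm)]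
  exact_mod_cast hsplit

lemma density_preimage_finset (g : ℕ → ℕ) (F : Finset ℕ) (m : ℕ) :
    density (g ⁻¹' ↑F) m = ∑ j ∈ F, density (g ⁻¹' {j}) m := by
  simp only [density, ncard_preimage_finset_inter_Iio, Nat.cast_sum, Finset.sum_div]

lemma HasFreq.eventually_lt_density {A B : Set ℕ} {a b : ℝ} (hA : HasFreq A a) (hAB : A ⊆ B)
    (hb : b < a) : ∀ᶠ m in atTop, b < density B m :=
  (hA.eventually (lt_mem_nhds hb)).mono fun m hm => hm.trans_le (density_mono hAB m)

section Preimage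

variable {g : ℕ → ℕ} {f : ℕ → ℝ}

lemma hasFreq_preimage_finset (hf : ∀ j, HasFreq (g ⁻¹' {j}) (f j)) (F : Finset ℕ) :
    HasFreq (g ⁻¹' ↑F) (∑ j ∈ F, f j) := by
  rw [hasFreq_iff_tendsto_density, funext (density_preimage_finset g F)]
  exact tendsto_finsetSum F fun j _ => hf j

lemma eventually_lt_density_preimage (hf : ∀ j, HasFreq (g ⁻¹' {j}) (f j)) (hs : Summable f)
    (T : Set ℕ) {b : ℝ} (hb : b < ∑' j, T.indicator f j) :
    ∀ᶠ m in atTop, b < density (g ⁻¹' T) m := by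
  classical
  obtain ⟨n, hn⟩ := ((hs.indicator T).hasSum.tendsto_sum_nat.eventually (lt_mem_nhds hb)).exists
  simp only [indicator_apply, ← Finset.sum_filter] at hn
  exact (hasFreq_preimage_finset hf _).eventually_lt_density
    (preimage_mono fun j hj => (Finset.mem_filter.1 hj).2) hn

theorem hasFreq_preimage (hf : ∀ j, HasFreq (g ⁻¹' {j}) (f j)) (hsum : HasSum f 1) (T : Set ℕ) :
    HasFreq (g ⁻¹' T) (∑' j, T.indicator f j) := by
  have hs := hsum.summable
  have hcompl : ∑' j, T.indicator f j + ∑' j, Tᶜ.indicator f j = 1 := by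
    rw [← (hs.indicator T).tsum_add (hs.indicator Tᶜ), ← hsum.tsum_eq]
    simp_rw [indicator_self_add_compl_apply]
  rw [hasFreq_iff_tendsto_density]
  refine tendsto_order.2 ⟨fun b hb => eventually_lt_density_preimage hf hs T hb, fun b hb => ?_⟩
  filter_upwards [eventually_lt_density_preimage hf hs Tᶜ (b := 1 - b) (by linarith),
    eventually_ne_atTop 0] with m hm hm0
  have := density_add_density_compl (g ⁻¹' T) hm0
  rw [← preimage_compl] at this
  linarith

end Preimage

/-- if every block of `π` has an asymptotic frequency and these
frequencies sum to `1`, then for every partition `σ` and every `i`, the `i`-th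
block of `Coag π σ` has asymptotic frequency `∑_{j ∈ σ(i)} |π(j)|`. -/
theorem stmt4 (π : Setoid ℕ) (f : ℕ → ℝ) (hf : ∀ l : ℕ, HasFreq (block π l) (f l))
    (hsum : HasSum f 1) (σ : Setoid ℕ) (i : ℕ) :
    HasFreq (block (Coag π σ) i) (∑' j : (block σ i), f (j : ℕ)) := by
  have hblock : block (Coag π σ) i = blockIdx π ⁻¹' block σ i := by
    simp only [block, blockIdx_coag]
    rfl
  rw [hblock, tsum_subtype]
  exact hasFreq_preimage hf hsum _
end

section
/- Let α > 1, A > 0, and let Ψ : [A,∞) → (0,∞) be continuously differentiable with Ψ(u)/u → ∞ and uΨ'(u)/Ψ(u) → α as u → ∞, and T := ∫_A^∞ du/Ψ(u) < ∞. Let v : (0,T) → (A,∞) be the (unique, decreasing) function determined by ∫_{v(t)}^∞ du/Ψ(u) = t for all t ∈ (0,T). Then v(t)/(t Ψ(v(t))) → α − 1 as t → 0+; equivalently, since v is differentiable with v'(t) = −Ψ(v(t)), one has t v'(t)/v(t) → −1/(α−1) as t → 0+. -/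
/-!
Put `F x = ∫_x^∞ du/Ψ(u)` and `G x = x / Ψ x`. Both tend to `0` at infinity, and
`G' / F' = (Ψ - xΨ')/Ψ² · (-Ψ) = xΨ'/Ψ - 1 → α - 1`,
so `G/F → α - 1` by l'Hôpital's rule.
Since `F (v t) = t` and `F` is positive and antitone, `v t → ∞` as `t → 0+`, and
`v t / (t Ψ (v t)) = G (v t) / F (v t)`.
-/

open MeasureTheory Filter Set Topology

theorem integral_Ici_pos {f : ℝ → ℝ} {x : ℝ} (hf : IntegrableOn f (Ici x))
    (hpos : ∀ u ∈ Ici x, 0 < f u) : 0 < ∫ u in Ici x, f u := by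
  rw [setIntegral_pos_iff_support_of_nonneg_ae
    (ae_restrict_of_forall_mem measurableSet_Ici fun u hu => (hpos u hu).le) hf]
  have hsupp : Function.support f ∩ Ici x = Ici x :=
    inter_eq_right.2 fun u hu => (hpos u hu).ne'
  simp [hsupp]

theorem antitoneOn_integral_Ici {f : ℝ → ℝ} {a : ℝ} (hf : IntegrableOn f (Ici a))
    (hnonneg : ∀ u ∈ Ici a, 0 ≤ f u) :
    AntitoneOn (fun x => ∫ u in Ici x, f u) (Ici a) := fun _ hx _ _ hxy =>
  setIntegral_mono_set (hf.mono_set (Ici_subset_Ici.2 hx))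
    (ae_restrict_of_forall_mem measurableSet_Ici fun u hu => hnonneg u (mem_Ici.2 (le_trans hx hu)))
    (Ici_subset_Ici.2 hxy).eventuallyLE

theorem hasDerivAt_integral_Ici {f : ℝ → ℝ} {a x : ℝ} (hf : IntegrableOn f (Ici a))
    (hx : a < x) (hcont : ContinuousAt f x) :
    HasDerivAt (fun y => ∫ u in Ici y, f u) (-f x) x := by
  have hmeas : StronglyMeasurableAtFilter f (𝓝 x) :=
    AEStronglyMeasurable.stronglyMeasurableAtFilter_of_mem hf.aestronglyMeasurable
      (Ici_mem_nhds hx)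
  have hftc : HasDerivAt (fun y => ∫ u in a..y, f u) (f x) x :=
    intervalIntegral.integral_hasDerivAt_right
      ((intervalIntegrable_iff_integrableOn_Icc_of_le hx.le).2
        (hf.mono_set Icc_subset_Ici_self)) hmeas hcont
  have htail : ∀ y ∈ Ici a,
      ∫ u in Ici y, f u = (∫ u in Ici a, f u) - ∫ u in a..y, f u := fun y hy => by
    rw [integral_Ici_eq_integral_Ioi, integral_Ici_eq_integral_Ioi,
      ← intervalIntegral.integral_Ioi_sub_Ioi (hf.mono_set Ioi_subset_Ici_self) hy,
      sub_sub_cancel]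
  simpa only [zero_sub] using ((hasDerivAt_const x _).sub hftc).congr_of_eventuallyEq
    (eventually_of_mem (Ici_mem_nhds hx) htail)

theorem AntitoneOn.tendsto_atTop_of_pos_of_apply_eq {F v : ℝ → ℝ} {a : ℝ}
    (hanti : AntitoneOn F (Ici a)) (hpos : ∀ x ∈ Ici a, 0 < F x)
    (hv : ∀ᶠ t in 𝓝[>] 0, a ≤ v t ∧ F (v t) = t) : Tendsto v (𝓝[>] 0) atTop := by
  refine tendsto_atTop.2 fun M => ?_
  have haM : a ≤ max M a := le_max_right M a
  filter_upwards [hv, Ioo_mem_nhdsGT (hpos _ haM)] with t ⟨hva, hFv⟩ ht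
  by_contra! hvM
  have := hanti hva haM (hvM.le.trans (le_max_left M a))
  linarith [ht.2]

theorem tendsto_div_div_integral_Ici_inv {Ψ Ψ' : ℝ → ℝ} {α A : ℝ}
    (hderiv : ∀ᶠ x in atTop, HasDerivAt Ψ (Ψ' x) x)
    (hgrow : Tendsto (fun u => Ψ u / u) atTop atTop)
    (hindex : Tendsto (fun u => u * Ψ' u / Ψ u) atTop (𝓝 α))
    (hint : IntegrableOn (fun u => (Ψ u)⁻¹) (Ici A)) :
    Tendsto (fun x => x / Ψ x / ∫ u in Ici x, (Ψ u)⁻¹) atTop (𝓝 (α - 1)) := by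
  have hΨpos : ∀ᶠ x in atTop, 0 < Ψ x := by
    filter_upwards [hgrow.eventually_gt_atTop 0, eventually_gt_atTop 0] with x hΨx hx
    exact (div_pos_iff_of_pos_right hx).1 hΨx
  have hlocal : ∀ᶠ x in atTop, A < x ∧ 0 < Ψ x ∧ HasDerivAt Ψ (Ψ' x) x :=
    (eventually_gt_atTop A).and (hΨpos.and hderiv)
  refine HasDerivAt.lhopital_zero_atTop (f' := fun x => (1 * Ψ x - x * Ψ' x) / Ψ x ^ 2)
    (g' := fun x => -(Ψ x)⁻¹) ?_ ?_ ?_ ?_ (tendsto_integral_Ici_zero tendsto_id) ?_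
  · filter_upwards [hlocal] with x ⟨_, hΨx, hΨ'⟩
    exact (hasDerivAt_id x).div hΨ' hΨx.ne'
  · filter_upwards [hlocal] with x ⟨hAx, hΨx, hΨ'⟩
    exact hasDerivAt_integral_Ici hint hAx (hΨ'.continuousAt.inv₀ hΨx.ne')
  · filter_upwards [hΨpos] with x hΨx
    exact neg_ne_zero.2 (inv_ne_zero hΨx.ne')
  · exact hgrow.inv_tendsto_atTop.congr fun u => inv_div (Ψ u) u
  · refine (hindex.sub_const 1).congr' ?_
    filter_upwards [hΨpos] with x hΨx
    field_simp
    ring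

theorem stmt9_general (α A : ℝ)
    (Ψ Ψ' : ℝ → ℝ)
    (hΨpos : ∀ u ∈ Set.Ici A, 0 < Ψ u)
    (hderiv : ∀ u ∈ Set.Ici A, HasDerivWithinAt Ψ (Ψ' u) (Set.Ici A) u)
    (hgrow : Tendsto (fun u : ℝ => Ψ u / u) atTop atTop)
    (hindex : Tendsto (fun u : ℝ => u * Ψ' u / Ψ u) atTop (nhds α))
    (hint : IntegrableOn (fun u : ℝ => (Ψ u)⁻¹) (Set.Ici A))
    (T : ℝ) (hT : T = ∫ u in Set.Ici A, (Ψ u)⁻¹)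
    (v : ℝ → ℝ)
    (hv : ∀ t ∈ Set.Ioo (0 : ℝ) T, A < v t ∧ ∫ u in Set.Ici (v t), (Ψ u)⁻¹ = t) :
    Tendsto (fun t : ℝ => v t / (t * Ψ (v t))) (nhdsWithin 0 (Set.Ioi 0))
      (nhds (α - 1)) := by
  have htail_pos : ∀ x ∈ Ici A, 0 < ∫ u in Ici x, (Ψ u)⁻¹ := fun x hx =>
    integral_Ici_pos (hint.mono_set (Ici_subset_Ici.2 hx))
      fun u hu => inv_pos.2 (hΨpos u (mem_Ici.2 (le_trans hx hu)))
  have hv_near : ∀ᶠ t in 𝓝[>] 0, A < v t ∧ ∫ u in Ici (v t), (Ψ u)⁻¹ = t :=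
    eventually_of_mem (Ioo_mem_nhdsGT (hT ▸ htail_pos A self_mem_Ici)) hv
  have hv_top : Tendsto v (𝓝[>] 0) atTop :=
    (antitoneOn_integral_Ici hint fun u hu => (inv_pos.2 (hΨpos u hu)).le)
      |>.tendsto_atTop_of_pos_of_apply_eq htail_pos (hv_near.mono fun t ht => ⟨ht.1.le, ht.2⟩)
  have hderivAt : ∀ᶠ x in atTop, HasDerivAt Ψ (Ψ' x) x :=
    (eventually_gt_atTop A).mono fun x hx => (hderiv x hx.le).hasDerivAt (Ici_mem_nhds hx)
  refine ((tendsto_div_div_integral_Ici_inv hderivAt hgrow hindex hint).comp hv_top).congr' ?_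
  filter_upwards [hv_near] with t ⟨_, hFv⟩
  simp only [Function.comp_apply, hFv, div_div, mul_comm]

/-- let `Ψ : [A,∞) → (0,∞)` be continuously differentiable with
`Ψ(u)/u → ∞`, `u Ψ'(u)/Ψ(u) → α > 1` as `u → ∞`, and `T := ∫_A^∞ du/Ψ(u) < ∞`.
If `v : (0,T) → (A,∞)` is determined by `∫_{v(t)}^∞ du/Ψ(u) = t`, then
`v(t)/(t Ψ(v(t))) → α - 1` as `t → 0+`. -/
theorem stmt9 (α A : ℝ) (hα : 1 < α) (hA : 0 < A)
    (Ψ Ψ' : ℝ → ℝ)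
    (hΨpos : ∀ u ∈ Set.Ici A, 0 < Ψ u)
    (hderiv : ∀ u ∈ Set.Ici A, HasDerivWithinAt Ψ (Ψ' u) (Set.Ici A) u)
    (hcont : ContinuousOn Ψ' (Set.Ici A))
    (hgrow : Tendsto (fun u : ℝ => Ψ u / u) atTop atTop)
    (hindex : Tendsto (fun u : ℝ => u * Ψ' u / Ψ u) atTop (nhds α))
    (hint : IntegrableOn (fun u : ℝ => (Ψ u)⁻¹) (Set.Ici A))
    (T : ℝ) (hT : T = ∫ u in Set.Ici A, (Ψ u)⁻¹)
    (v : ℝ → ℝ)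
    (hv : ∀ t ∈ Set.Ioo (0 : ℝ) T, A < v t ∧ ∫ u in Set.Ici (v t), (Ψ u)⁻¹ = t) :
    Tendsto (fun t : ℝ => v t / (t * Ψ (v t))) (nhdsWithin 0 (Set.Ioi 0))
      (nhds (α - 1)) :=
  stmt9_general α A Ψ Ψ' hΨpos hderiv hgrow hindex hint T hT v hv
end

section
/- Let ν be a Borel measure on (0,1) such that ∫_{(0,1)} u ν(du) < ∞ and ∫_{(0,1)} u (−log u) ν(du) < ∞. Then for every real ã > 1, the series ∑_{k=0}^∞ ∫_{(0, ã^{−k/2}]} u ν(du) is finite. -/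
open MeasureTheory Set
open scoped ENNReal

/-!
By Tonelli, the series equals `∫ u · #{k | u ≤ a^(-k/2)} dν(u)`, and
`u ≤ a^(-k/2)` holds exactly for `k ≤ 2 (-log u) / log a`. So the integrand is at most
`u + (2 / log a) · u (-log u)`, whose integral is finite by the two hypotheses.
-/

lemma le_rpow_neg_div_two_iff {a u : ℝ} (ha : 1 < a) (hu : 0 < u) (x : ℝ) :
    u ≤ a ^ (-x / 2) ↔ x ≤ 2 * -Real.log u / Real.log a := by
  have ha0 : 0 < a := one_pos.trans ha
  rw [← Real.log_le_log_iff hu (Real.rpow_pos_of_pos ha0 _), Real.log_rpow ha0,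
    le_div_iff₀ (Real.log_pos ha)]
  constructor <;> intro h <;> linarith

lemma ENNReal.tsum_le_ofReal_add_one_mul {f : ℕ → ℝ≥0∞} {M : ℝ} {c : ℝ≥0∞} (hM : 0 ≤ M)
    (hf : ∀ k, f k ≤ c) (hzero : ∀ k : ℕ, M < k → f k = 0) :
    ∑' k, f k ≤ ENNReal.ofReal (M + 1) * c := by
  have hsupp : ∀ k ∉ Finset.range (⌊M⌋₊ + 1), f k = 0 := fun k hk =>
    hzero k <| (Nat.lt_floor_add_one M).trans_le <| by
      exact_mod_cast not_lt.mp (Finset.mem_range.not.mp hk)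
  have hcard : ((⌊M⌋₊ + 1 : ℕ) : ℝ≥0∞) ≤ ENNReal.ofReal (M + 1) := by
    rw [← ENNReal.ofReal_natCast]
    exact ENNReal.ofReal_le_ofReal (by push_cast; linarith [Nat.floor_le hM])
  calc ∑' k, f k = ∑ k ∈ Finset.range (⌊M⌋₊ + 1), f k := tsum_eq_sum hsupp
    _ ≤ ∑ _k ∈ Finset.range (⌊M⌋₊ + 1), c := Finset.sum_le_sum fun k _ => hf k
    _ = ((⌊M⌋₊ + 1 : ℕ) : ℝ≥0∞) * c := by rw [Finset.sum_const, Finset.card_range, nsmul_eq_mul]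
    _ ≤ ENNReal.ofReal (M + 1) * c := by gcongr

lemma tsum_indicator_Ioc_rpow_le {a u : ℝ} (ha : 1 < a) (hu : u ∈ Ioo 0 1) :
    ∑' k : ℕ, (Ioc 0 (a ^ (-(k : ℝ) / 2))).indicator ENNReal.ofReal u
      ≤ ENNReal.ofReal u + ENNReal.ofReal (2 / Real.log a) * ENNReal.ofReal (u * -Real.log u) := by
  have hlog : 0 ≤ -Real.log u := neg_nonneg.mpr (Real.log_nonpos hu.1.le hu.2.le)
  have hloga : 0 < Real.log a := Real.log_pos ha
  have hc : 0 ≤ 2 / Real.log a := by positivity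
  calc _ ≤ ENNReal.ofReal (2 * -Real.log u / Real.log a + 1) * ENNReal.ofReal u := by
        refine ENNReal.tsum_le_ofReal_add_one_mul (by positivity)
          (fun k => indicator_le_self _ _ u) fun k hk => indicator_of_notMem ?_ _
        exact fun hmem => hk.not_ge <| (le_rpow_neg_div_two_iff ha hu.1 k).mp hmem.2
    _ = ENNReal.ofReal (u + 2 / Real.log a * (u * -Real.log u)) := by
        rw [← ENNReal.ofReal_mul (by positivity)]
        congr 1
        field_simp
        ring
    _ = _ := by
        rw [ENNReal.ofReal_add hu.1.le (mul_nonneg hc (mul_nonneg hu.1.le hlog)),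
          ENNReal.ofReal_mul hc]

/-- if `ν` is a Borel measure on `(0,1)` with
`∫ u ν(du) < ∞` and `∫ u (-log u) ν(du) < ∞`, then for every `a > 1` the series
`∑_k ∫_{(0, a^{-k/2}]} u ν(du)` is finite. -/
theorem stmt10 (ν : Measure ℝ) (hsupp : ν (Set.Ioo (0 : ℝ) 1)ᶜ = 0)
    (h1 : ∫⁻ u in Set.Ioo (0 : ℝ) 1, ENNReal.ofReal u ∂ν < ⊤)
    (h2 : ∫⁻ u in Set.Ioo (0 : ℝ) 1, ENNReal.ofReal (u * (-Real.log u)) ∂ν < ⊤)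
    (a : ℝ) (ha : 1 < a) :
    ∑' k : ℕ, ∫⁻ u in Set.Ioc (0 : ℝ) (a ^ (-(k : ℝ) / 2)), ENNReal.ofReal u ∂ν < ⊤ := by
  have hν : ν.restrict (Ioo 0 1) = ν := Measure.restrict_eq_self_of_ae_mem (ae_iff.mpr hsupp)
  rw [← hν]
  calc ∑' k : ℕ, ∫⁻ u in Ioc 0 (a ^ (-(k : ℝ) / 2)), ENNReal.ofReal u ∂ν.restrict (Ioo 0 1)
      = ∫⁻ u in Ioo 0 1, ∑' k : ℕ, (Ioc 0 (a ^ (-(k : ℝ) / 2))).indicator ENNReal.ofReal u ∂ν := by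
        simp_rw [← lintegral_indicator measurableSet_Ioc]
        exact (lintegral_tsum fun k =>
          (ENNReal.measurable_ofReal.indicator measurableSet_Ioc).aemeasurable).symm
    _ ≤ ∫⁻ u in Ioo 0 1, ENNReal.ofReal u
          + ENNReal.ofReal (2 / Real.log a) * ENNReal.ofReal (u * -Real.log u) ∂ν :=
        setLIntegral_mono' measurableSet_Ioo fun u hu => tsum_indicator_Ioc_rpow_le ha hu
    _ = (∫⁻ u in Ioo 0 1, ENNReal.ofReal u ∂ν)
          + ENNReal.ofReal (2 / Real.log a) * ∫⁻ u in Ioo 0 1, ENNReal.ofReal (u * -Real.log u) ∂ν := by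
        rw [lintegral_add_left (by fun_prop), lintegral_const_mul _ (by fun_prop)]
    _ < ⊤ := ENNReal.add_lt_top.mpr ⟨h1, ENNReal.mul_lt_top ENNReal.ofReal_lt_top h2⟩
end

section
/- Let ν be a Borel measure on (0,1) such that ∫_{(0,1)} u ν(du) < ∞ and ∫_{(0,1)} u (−log u) ν(du) < ∞, and for n ≥ 1 set b(n) := ∫_{(0,1)} u (1−u)^{n−1} ν(du). Then for every real ã > 1, the series ∑_{k=0}^∞ b(⌈ã^k⌉) is finite. -/
open MeasureTheory Set
open scoped ENNReal

/-- Pointwise bound: for `u ∈ (0,1)` and `a > 1`,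
`∑' k, u (1-u)^{⌈a^k⌉-1} ≤ c1 u + c2 u(-log u)`. -/
lemma stmt13_pointwise (a : ℝ) (ha : 1 < a) {u : ℝ} (hu0 : 0 < u) (hu1 : u < 1) :
    (∑' k : ℕ, ENNReal.ofReal (u * (1 - u) ^ (⌈a ^ k⌉₊ - 1)))
      ≤ ENNReal.ofReal (1 + Real.exp 1 * (a / (a - 1))) * ENNReal.ofReal u
        + ENNReal.ofReal (1 / Real.log a) * ENNReal.ofReal (u * (-Real.log u)) := by
  have ha0 : 0 < a := lt_trans one_pos ha
  have hla : 0 < Real.log a := Real.log_pos ha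
  set F : ℕ → ℝ≥0∞ := fun k => ENNReal.ofReal (u * (1 - u) ^ (⌈a ^ k⌉₊ - 1)) with hF
  set K : ℕ := ⌈Real.logb a u⁻¹⌉₊ with hKdef
  have hinv1 : 1 ≤ u⁻¹ := one_le_inv_iff₀.2 ⟨hu0, hu1.le⟩
  have hlogb0 : 0 ≤ Real.logb a u⁻¹ := Real.logb_nonneg ha hinv1
  -- a^K ≥ 1/u
  have hK1 : u⁻¹ ≤ a ^ K := by
    have : a ^ (Real.logb a u⁻¹) ≤ a ^ ((K : ℕ) : ℝ) :=
      Real.rpow_le_rpow_of_exponent_le ha.le (Nat.le_ceil _)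
    rwa [Real.rpow_logb ha0 (ne_of_gt ha), Real.rpow_natCast] at this
    · exact inv_pos.2 hu0
  have hKu : 1 ≤ u * a ^ K := by
    have h := mul_le_mul_of_nonneg_left hK1 hu0.le
    rwa [mul_inv_cancel₀ hu0.ne'] at h
  -- K ≤ (-log u)/log a + 1
  have hKle : (K : ℝ) ≤ -Real.log u / Real.log a + 1 := by
    calc (K : ℝ) ≤ Real.logb a u⁻¹ + 1 := (Nat.ceil_lt_add_one hlogb0).le
    _ = -Real.log u / Real.log a + 1 := by rw [Real.logb, Real.log_inv]
  -- small-index bound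
  have h_small : ∀ k : ℕ, F k ≤ ENNReal.ofReal u := by
    intro k
    apply ENNReal.ofReal_le_ofReal
    have h1u : (0:ℝ) ≤ 1 - u := by linarith
    calc u * (1 - u) ^ (⌈a ^ k⌉₊ - 1) ≤ u * 1 := by
          apply mul_le_mul_of_nonneg_left _ hu0.le
          exact pow_le_one₀ h1u (by linarith)
    _ = u := mul_one u
  -- tail bound
  have h_tail : ∀ j : ℕ, F (j + K)
      ≤ ENNReal.ofReal (Real.exp 1 * u) * (ENNReal.ofReal a⁻¹) ^ j := by
    intro j
    rw [← ENNReal.ofReal_pow (by positivity), ← ENNReal.ofReal_mul (by positivity)]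
    apply ENNReal.ofReal_le_ofReal
    set n : ℕ := ⌈a ^ (j + K)⌉₊ with hn
    have hak1 : (1:ℝ) ≤ a ^ (j + K) := one_le_pow₀ ha.le
    have hn1 : 1 ≤ n := Nat.one_le_ceil_iff.2 (by linarith)
    have hcast : ((n - 1 : ℕ) : ℝ) = (n : ℝ) - 1 := by
      rw [Nat.cast_sub hn1]; simp
    have h1u : (0:ℝ) ≤ 1 - u := by linarith
    have key : (1 - u) ^ (n - 1) ≤ Real.exp 1 * a⁻¹ ^ j := by
      have step1 : (1 - u) ^ (n - 1) ≤ Real.exp (-u) ^ (n - 1) :=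
        pow_le_pow_left₀ h1u (by linarith [Real.add_one_le_exp (-u)]) _
      have step2 : Real.exp (-u) ^ (n - 1) = Real.exp (-(((n - 1 : ℕ) : ℝ) * u)) := by
        rw [← Real.exp_nat_mul]; ring_nf
      have hna : a ^ (j + K) ≤ (n : ℝ) := Nat.le_ceil _
      have step3 : Real.exp (-(((n - 1 : ℕ) : ℝ) * u))
          ≤ Real.exp (-(( a ^ (j + K) - 1) * u)) := by
        apply Real.exp_le_exp.2
        rw [hcast]
        nlinarith
      have hx : (0:ℝ) < a ^ (j + K) * u := by positivity
      have step4 : Real.exp (-(a ^ (j + K) * u)) ≤ (a ^ (j + K) * u)⁻¹ := by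
        rw [Real.exp_neg]
        apply inv_anti₀ hx
        linarith [Real.add_one_le_exp (a ^ (j + K) * u)]
      have step5 : (a ^ (j + K) * u)⁻¹ ≤ a⁻¹ ^ j := by
        rw [inv_pow]
        apply inv_anti₀ (by positivity)
        calc (a:ℝ) ^ j = a ^ j * 1 := (mul_one _).symm
        _ ≤ a ^ j * (u * a ^ K) := by
            apply mul_le_mul_of_nonneg_left hKu (by positivity)
        _ = a ^ (j + K) * u := by rw [pow_add]; ring
      have hexpu : Real.exp u ≤ Real.exp 1 := Real.exp_le_exp.2 hu1.le
      calc (1 - u) ^ (n - 1) ≤ Real.exp (-(((n - 1 : ℕ) : ℝ) * u)) := by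
            rw [← step2]; exact step1
      _ ≤ Real.exp (-((a ^ (j + K) - 1) * u)) := step3
      _ = Real.exp u * Real.exp (-(a ^ (j + K) * u)) := by
            rw [← Real.exp_add]; ring_nf
      _ ≤ Real.exp 1 * (a ^ (j + K) * u)⁻¹ := by
            apply mul_le_mul hexpu step4 (Real.exp_pos _).le (Real.exp_pos _).le
      _ ≤ Real.exp 1 * a⁻¹ ^ j := by
            apply mul_le_mul_of_nonneg_left step5 (Real.exp_pos _).le
    calc u * (1 - u) ^ (n - 1) ≤ u * (Real.exp 1 * a⁻¹ ^ j) :=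
          mul_le_mul_of_nonneg_left key hu0.le
    _ = Real.exp 1 * u * a⁻¹ ^ j := by ring
  -- split the sum
  have hsplit : (∑' k, F k) = (∑ k ∈ Finset.range K, F k) + ∑' j, F (j + K) :=
    (HasSum.sum_range_add (ENNReal.summable.hasSum)).tsum_eq
  have hgeom : (∑' j, F (j + K))
      ≤ ENNReal.ofReal (Real.exp 1 * u) * (1 - ENNReal.ofReal a⁻¹)⁻¹ := by
    calc (∑' j, F (j + K))
        ≤ ∑' j : ℕ, ENNReal.ofReal (Real.exp 1 * u) * (ENNReal.ofReal a⁻¹) ^ j :=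
          ENNReal.tsum_le_tsum h_tail
    _ = ENNReal.ofReal (Real.exp 1 * u) * ∑' j : ℕ, (ENNReal.ofReal a⁻¹) ^ j :=
          ENNReal.tsum_mul_left
    _ = _ := by rw [ENNReal.tsum_geometric]
  have hgeom_val : (1 - ENNReal.ofReal a⁻¹)⁻¹ = ENNReal.ofReal (a / (a - 1)) := by
    have h1a : (0:ℝ) < 1 - a⁻¹ := by
      have : a⁻¹ < 1 := inv_lt_one_of_one_lt₀ ha
      linarith
    rw [← ENNReal.ofReal_one, ← ENNReal.ofReal_sub _ (by positivity),
      ← ENNReal.ofReal_inv_of_pos h1a]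
    congr 1
    field_simp
  have hsmallsum : (∑ k ∈ Finset.range K, F k) ≤ ENNReal.ofReal ((K : ℝ) * u) := by
    calc (∑ k ∈ Finset.range K, F k) ≤ ∑ _k ∈ Finset.range K, ENNReal.ofReal u :=
          Finset.sum_le_sum fun k _ => h_small k
    _ = K * ENNReal.ofReal u := by
          rw [Finset.sum_const, Finset.card_range, nsmul_eq_mul]
    _ = ENNReal.ofReal ((K : ℝ) * u) := by
          rw [ENNReal.ofReal_mul (Nat.cast_nonneg K), ENNReal.ofReal_natCast]
  have hloguneg : (0:ℝ) ≤ -Real.log u := by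
    have := Real.log_neg hu0 hu1
    linarith
  have hdiv : (0:ℝ) ≤ a / (a - 1) := div_nonneg ha0.le (by linarith)
  have he1 : (0:ℝ) ≤ Real.exp 1 := (Real.exp_pos 1).le
  have hB : (0:ℝ) ≤ Real.exp 1 * u * (a / (a - 1)) :=
    mul_nonneg (by positivity) hdiv
  have hc1' : (0:ℝ) ≤ 1 + Real.exp 1 * (a / (a - 1)) := by nlinarith
  have hC : (0:ℝ) ≤ (1 + Real.exp 1 * (a / (a - 1))) * u := mul_nonneg hc1' hu0.le
  have hla' : (0:ℝ) ≤ 1 / Real.log a := div_nonneg zero_le_one hla.le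
  have hD : (0:ℝ) ≤ 1 / Real.log a * (u * (-Real.log u)) :=
    mul_nonneg hla' (mul_nonneg hu0.le hloguneg)
  calc (∑' k, F k) = (∑ k ∈ Finset.range K, F k) + ∑' j, F (j + K) := hsplit
  _ ≤ ENNReal.ofReal ((K : ℝ) * u)
        + ENNReal.ofReal (Real.exp 1 * u) * ENNReal.ofReal (a / (a - 1)) := by
      apply add_le_add hsmallsum
      rw [← hgeom_val]; exact hgeom
  _ = ENNReal.ofReal ((K : ℝ) * u) + ENNReal.ofReal (Real.exp 1 * u * (a / (a - 1))) := by
      congr 1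
      exact (ENNReal.ofReal_mul (by positivity)).symm
  _ ≤ ENNReal.ofReal ((1 + Real.exp 1 * (a / (a - 1))) * u)
        + ENNReal.ofReal (1 / Real.log a * (u * (-Real.log u))) := by
      have hKu' : (K : ℝ) * u ≤ u + u * (-Real.log u) / Real.log a := by
        have := mul_le_mul_of_nonneg_right hKle hu0.le
        calc (K : ℝ) * u ≤ (-Real.log u / Real.log a + 1) * u := this
        _ = u + u * (-Real.log u) / Real.log a := by ring
      have h2 : (K : ℝ) * u + Real.exp 1 * u * (a / (a - 1))
          ≤ (1 + Real.exp 1 * (a / (a - 1))) * u + 1 / Real.log a * (u * (-Real.log u)) := by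
        have : u * (-Real.log u) / Real.log a = 1 / Real.log a * (u * (-Real.log u)) := by ring
        nlinarith [hKu']
      calc ENNReal.ofReal ((K : ℝ) * u) + ENNReal.ofReal (Real.exp 1 * u * (a / (a - 1)))
          = ENNReal.ofReal ((K : ℝ) * u + Real.exp 1 * u * (a / (a - 1))) := by
            rw [ENNReal.ofReal_add (by positivity) hB]
      _ ≤ ENNReal.ofReal ((1 + Real.exp 1 * (a / (a - 1))) * u
            + 1 / Real.log a * (u * (-Real.log u))) := ENNReal.ofReal_le_ofReal h2
      _ = _ := ENNReal.ofReal_add hC hD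
  _ = _ := by
      rw [ENNReal.ofReal_mul hc1', ENNReal.ofReal_mul hla']

/-- for a Borel measure `ν` on `(0,1)` with `∫ u ν(du) < ∞`
and `∫ u (-log u) ν(du) < ∞`, setting `b(n) := ∫ u (1-u)^{n-1} ν(du)`, for every
`a > 1` the series `∑_k b(⌈a^k⌉)` is finite. -/
theorem stmt13 (ν : Measure ℝ) (hsupp : ν (Set.Ioo (0 : ℝ) 1)ᶜ = 0)
    (h1 : ∫⁻ u in Set.Ioo (0 : ℝ) 1, ENNReal.ofReal u ∂ν < ⊤)
    (h2 : ∫⁻ u in Set.Ioo (0 : ℝ) 1, ENNReal.ofReal (u * (-Real.log u)) ∂ν < ⊤)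
    (a : ℝ) (ha : 1 < a) :
    ∑' k : ℕ,
      ∫⁻ u in Set.Ioo (0 : ℝ) 1, ENNReal.ofReal (u * (1 - u) ^ (⌈a ^ k⌉₊ - 1)) ∂ν < ⊤ := by
  set c1 : ℝ≥0∞ := ENNReal.ofReal (1 + Real.exp 1 * (a / (a - 1))) with hc1
  set c2 : ℝ≥0∞ := ENNReal.ofReal (1 / Real.log a) with hc2
  have hmeas : ∀ k : ℕ, Measurable fun u : ℝ =>
      ENNReal.ofReal (u * (1 - u) ^ (⌈a ^ k⌉₊ - 1)) := by
    intro k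
    apply Measurable.ennreal_ofReal
    exact measurable_id.mul ((measurable_const.sub measurable_id).pow_const _)
  have hmu : Measurable fun u : ℝ => ENNReal.ofReal u := measurable_id.ennreal_ofReal
  have hmulog : Measurable fun u : ℝ => ENNReal.ofReal (u * (-Real.log u)) :=
    (measurable_id.mul Real.measurable_log.neg).ennreal_ofReal
  have hG : Measurable fun u : ℝ =>
      c1 * ENNReal.ofReal u + c2 * ENNReal.ofReal (u * (-Real.log u)) :=
    (hmu.const_mul c1).add (hmulog.const_mul c2)
  calc (∑' k : ℕ, ∫⁻ u in Set.Ioo (0:ℝ) 1,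
        ENNReal.ofReal (u * (1 - u) ^ (⌈a ^ k⌉₊ - 1)) ∂ν)
      = ∫⁻ u in Set.Ioo (0:ℝ) 1,
          ∑' k : ℕ, ENNReal.ofReal (u * (1 - u) ^ (⌈a ^ k⌉₊ - 1)) ∂ν :=
        (lintegral_tsum fun k => (hmeas k).aemeasurable).symm
  _ ≤ ∫⁻ u in Set.Ioo (0:ℝ) 1,
        (c1 * ENNReal.ofReal u + c2 * ENNReal.ofReal (u * (-Real.log u))) ∂ν := by
      apply setLIntegral_mono hG
      intro u hu
      exact stmt13_pointwise a ha hu.1 hu.2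
  _ = c1 * ∫⁻ u in Set.Ioo (0:ℝ) 1, ENNReal.ofReal u ∂ν
        + c2 * ∫⁻ u in Set.Ioo (0:ℝ) 1, ENNReal.ofReal (u * (-Real.log u)) ∂ν := by
      rw [lintegral_add_left (hmu.const_mul c1), lintegral_const_mul c1 hmu,
        lintegral_const_mul c2 hmulog]
  _ < ⊤ := by
      apply ENNReal.add_lt_top.2
      constructor
      · exact ENNReal.mul_lt_top ENNReal.ofReal_lt_top h1
      · exact ENNReal.mul_lt_top ENNReal.ofReal_lt_top h2
end

section
/- Let (u_j)_{j≥1} be independent and identically distributed random variables with values in [0,1] and E[u_1] > 0. Then the infinite product P := ∏_{i=1}^∞ (1 − (1/2) ∏_{j=1}^{i−1} (1 − u_j)) (a decreasing limit of partial products, each factor lying in [1/2, 1]) converges almost surely to a strictly positive limit, and E[P] > 0. -/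
/-!
Write `V i = ∏_{j<i} (1 - u_j)`. By independence `E[V i] = (1 - E[u_0])^i` is geometric, so
`∑ V i < ∞` almost surely. Since `e^{-v} ≤ 1 - v/2` on `[0, 1]`, every partial product of `P`
is at least `exp (-∑ V i) > 0`; being nonincreasing, the partial products converge to a positive
limit, and an almost surely positive random variable has positive expectation.
-/

open MeasureTheory ProbabilityTheory Filter Finset

lemma Real.exp_neg_le_one_sub_half_mul {v : ℝ} (h0 : 0 ≤ v) (h1 : v ≤ 1) :
    Real.exp (-v) ≤ 1 - 2⁻¹ * v := by
  have hv : 0 < 1 + v := by linarith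
  calc Real.exp (-v) = (Real.exp v)⁻¹ := Real.exp_neg v
    _ ≤ (1 + v)⁻¹ := inv_anti₀ hv (by linarith [Real.add_one_le_exp v])
    _ ≤ 1 - 2⁻¹ * v := by rw [inv_le_iff_one_le_mul₀ hv]; nlinarith

section HalfProducts

variable {a : ℕ → ℝ}

lemma prod_range_one_sub_half_mul_nonneg (h1 : ∀ i, a i ≤ 1) (m : ℕ) :
    0 ≤ ∏ i ∈ range m, (1 - 2⁻¹ * a i) :=
  prod_nonneg fun i _ => by linarith [h1 i]

lemma antitone_prod_range_one_sub_half_mul (h0 : ∀ i, 0 ≤ a i) (h1 : ∀ i, a i ≤ 1) :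
    Antitone fun m => ∏ i ∈ range m, (1 - 2⁻¹ * a i) :=
  (prod_anti_set_of_le_one (fun i => by linarith [h1 i]) fun i => by linarith [h0 i]).comp_monotone
    range_mono

lemma bddBelow_range_prod_range_one_sub_half_mul (h1 : ∀ i, a i ≤ 1) :
    BddBelow (Set.range fun m => ∏ i ∈ range m, (1 - 2⁻¹ * a i)) :=
  ⟨0, Set.forall_mem_range.2 (prod_range_one_sub_half_mul_nonneg h1)⟩

lemma tendsto_prod_range_one_sub_half_mul (h0 : ∀ i, 0 ≤ a i) (h1 : ∀ i, a i ≤ 1) :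
    Tendsto (fun m => ∏ i ∈ range m, (1 - 2⁻¹ * a i)) atTop
      (nhds (⨅ m, ∏ i ∈ range m, (1 - 2⁻¹ * a i))) :=
  tendsto_atTop_ciInf (antitone_prod_range_one_sub_half_mul h0 h1)
    (bddBelow_range_prod_range_one_sub_half_mul h1)

lemma iInf_prod_range_one_sub_half_mul_le_one (h1 : ∀ i, a i ≤ 1) :
    ⨅ m, ∏ i ∈ range m, (1 - 2⁻¹ * a i) ≤ 1 :=
  ciInf_le_of_le (bddBelow_range_prod_range_one_sub_half_mul h1) 0 (prod_range_zero _).le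

lemma exp_neg_tsum_le_prod_range_one_sub_half_mul (h0 : ∀ i, 0 ≤ a i) (h1 : ∀ i, a i ≤ 1)
    (hs : Summable a) (m : ℕ) :
    Real.exp (-∑' i, a i) ≤ ∏ i ∈ range m, (1 - 2⁻¹ * a i) :=
  calc Real.exp (-∑' i, a i) ≤ Real.exp (-∑ i ∈ range m, a i) :=
        Real.exp_le_exp.2 (neg_le_neg (hs.sum_le_tsum _ fun i _ => h0 i))
    _ = ∏ i ∈ range m, Real.exp (-a i) := by rw [← sum_neg_distrib, Real.exp_sum]
    _ ≤ ∏ i ∈ range m, (1 - 2⁻¹ * a i) :=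
        prod_le_prod (fun i _ => (Real.exp_pos _).le) fun i _ =>
          Real.exp_neg_le_one_sub_half_mul (h0 i) (h1 i)

lemma iInf_prod_range_one_sub_half_mul_pos (h0 : ∀ i, 0 ≤ a i) (h1 : ∀ i, a i ≤ 1)
    (hs : Summable a) :
    0 < ⨅ m, ∏ i ∈ range m, (1 - 2⁻¹ * a i) :=
  (Real.exp_pos _).trans_le (le_ciInf (exp_neg_tsum_le_prod_range_one_sub_half_mul h0 h1 hs))

end HalfProducts

lemma MeasureTheory.ae_summable_norm_of_summable_integral_norm {α E ι : Type*} [MeasurableSpace α]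
    {μ : Measure α} [NormedAddCommGroup E] [Countable ι] {f : ι → α → E}
    (hf : ∀ n, Integrable (f n) μ) (hs : Summable fun n => ∫ a, ‖f n a‖ ∂μ) :
    ∀ᵐ a ∂μ, Summable fun n => ‖f n a‖ := by
  refine summable_norm_of_tsum_eLpNorm_ne_top le_rfl (fun n => (hf n).aestronglyMeasurable) ?_
  simp_rw [eLpNorm_one_eq_lintegral_enorm, ← ofReal_integral_norm_eq_lintegral_enorm (hf _),
    ← ENNReal.ofReal_tsum_of_nonneg (fun n => integral_nonneg fun _ => norm_nonneg _) hs]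
  exact ENNReal.ofReal_ne_top

lemma MeasureTheory.integral_pos_of_ae_pos {α : Type*} [MeasurableSpace α] {μ : Measure α}
    [NeZero μ] {f : α → ℝ} (hf : ∀ᵐ a ∂μ, 0 < f a) (hfi : Integrable f μ) :
    0 < ∫ a, f a ∂μ := by
  rw [integral_pos_iff_support_of_nonneg_ae (hf.mono fun _ h => h.le) hfi, pos_iff_ne_zero]
  intro h
  have hc : μ (Function.support f)ᶜ = 0 := ae_iff.1 (hf.mono fun _ h => h.ne')
  exact NeZero.ne μ (by simpa using measure_union_null h hc)

lemma ProbabilityTheory.iIndepFun.integral_prod_range_eq_pow {Ω 𝕜 : Type*} [MeasurableSpace Ω]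
    {μ : Measure Ω} [RCLike 𝕜] {X : ℕ → Ω → 𝕜} (hX : iIndepFun X μ)
    (hid : ∀ j, IdentDistrib (X j) (X 0) μ μ) (n : ℕ) :
    ∫ ω, ∏ j ∈ range n, X j ω ∂μ = (∫ ω, X 0 ω ∂μ) ^ n := by
  have hXn : iIndepFun (fun j : range n => X j) μ := hX.precomp Subtype.val_injective
  have h := hXn.integral_fun_prod_eq_prod_integral fun j =>
    (hid j).aemeasurable_fst.aestronglyMeasurable
  simp only [(hid _).integral_eq, prod_const, card_univ, Fintype.card_coe, card_range] at h
  rw [← h]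
  congr 1 with ω
  exact (prod_coe_sort (range n) fun j => X j ω).symm

lemma prod_range_one_sub_mem_Icc {x : ℕ → ℝ} (hx : ∀ j, x j ∈ Set.Icc (0 : ℝ) 1) (i : ℕ) :
    ∏ j ∈ range i, (1 - x j) ∈ Set.Icc (0 : ℝ) 1 :=
  ⟨prod_nonneg fun j _ => sub_nonneg.2 (hx j).2,
    prod_le_one (fun j _ => sub_nonneg.2 (hx j).2) fun j _ => sub_le_self _ (hx j).1⟩

section UniformProducts

variable {Ω : Type*} [MeasurableSpace Ω] {μ : Measure Ω} [IsProbabilityMeasure μ]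
  {u : ℕ → Ω → ℝ}

lemma integral_prod_range_one_sub_eq_pow (hrange : ∀ j ω, u j ω ∈ Set.Icc (0 : ℝ) 1)
    (hindep : iIndepFun u μ) (hid : ∀ j, IdentDistrib (u j) (u 0) μ μ) (i : ℕ) :
    ∫ ω, ∏ j ∈ range i, (1 - u j ω) ∂μ = (1 - ∫ ω, u 0 ω ∂μ) ^ i := by
  have hu0 : Integrable (u 0) μ :=
    .of_mem_Icc 0 1 (hid 0).aemeasurable_fst (.of_forall (hrange 0))
  have hmean : ∫ ω, (1 - u 0 ω) ∂μ = 1 - ∫ ω, u 0 ω ∂μ := by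
    simp [integral_sub (integrable_const 1) hu0]
  rw [← hmean]
  exact (hindep.comp (fun _ x => 1 - x) fun _ => by fun_prop).integral_prod_range_eq_pow
    (fun j => (hid j).comp (by fun_prop)) i

lemma ae_summable_prod_range_one_sub (hrange : ∀ j ω, u j ω ∈ Set.Icc (0 : ℝ) 1)
    (hindep : iIndepFun u μ) (hid : ∀ j, IdentDistrib (u j) (u 0) μ μ)
    (hpos : 0 < ∫ ω, u 0 ω ∂μ) :
    ∀ᵐ ω ∂μ, Summable fun i => ∏ j ∈ range i, (1 - u j ω) := by
  have hu j : AEMeasurable (u j) μ := (hid j).aemeasurable_fst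
  have hV i ω := prod_range_one_sub_mem_Icc (hrange · ω) i
  have hVint i : Integrable (fun ω => ∏ j ∈ range i, (1 - u j ω)) μ :=
    .of_mem_Icc 0 1 (by fun_prop) (.of_forall (hV i))
  have hmean_le : ∫ ω, u 0 ω ∂μ ≤ 1 := by
    simpa using integral_mono (.of_mem_Icc 0 1 (hu 0) (.of_forall (hrange 0)))
      (integrable_const 1) fun ω => (hrange 0 ω).2
  have hgeo : Summable fun i => ∫ ω, ‖∏ j ∈ range i, (1 - u j ω)‖ ∂μ := by
    simp_rw [fun i ω => Real.norm_of_nonneg (hV i ω).1,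
      integral_prod_range_one_sub_eq_pow hrange hindep hid]
    exact summable_geometric_of_lt_one (by linarith) (by linarith)
  filter_upwards [ae_summable_norm_of_summable_integral_norm hVint hgeo] with ω hω
  exact hω.of_norm

end UniformProducts

theorem stmt18_general {Ω : Type*} [MeasureSpace Ω] [IsProbabilityMeasure (ℙ : Measure Ω)]
    (u : ℕ → Ω → ℝ)
    (hrange : ∀ j ω, u j ω ∈ Set.Icc (0 : ℝ) 1)
    (hindep : iIndepFun u ℙ)
    (hid : ∀ j, IdentDistrib (u j) (u 0) ℙ ℙ)
    (hpos : 0 < ∫ ω, u 0 ω) :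
    (∀ᵐ ω ∂ℙ,
        Tendsto (fun m : ℕ =>
            ∏ i ∈ Finset.range m, (1 - 2⁻¹ * ∏ j ∈ Finset.range i, (1 - u j ω)))
          atTop
          (nhds (⨅ m : ℕ,
            ∏ i ∈ Finset.range m, (1 - 2⁻¹ * ∏ j ∈ Finset.range i, (1 - u j ω)))) ∧
        0 < ⨅ m : ℕ,
          ∏ i ∈ Finset.range m, (1 - 2⁻¹ * ∏ j ∈ Finset.range i, (1 - u j ω))) ∧
      0 < ∫ ω, ⨅ m : ℕ,
        ∏ i ∈ Finset.range m, (1 - 2⁻¹ * ∏ j ∈ Finset.range i, (1 - u j ω)) := by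
  have hV ω i := prod_range_one_sub_mem_Icc (hrange · ω) i
  have hP := (ae_summable_prod_range_one_sub hrange hindep hid hpos).mono fun ω hs =>
    And.intro (tendsto_prod_range_one_sub_half_mul (hV ω · |>.1) (hV ω · |>.2))
      (iInf_prod_range_one_sub_half_mul_pos (hV ω · |>.1) (hV ω · |>.2) hs)
  refine ⟨hP, integral_pos_of_ae_pos (hP.mono fun _ h => h.2) (.of_mem_Icc 0 1 ?_ ?_)⟩
  · have hu j : AEMeasurable (u j) ℙ := (hid j).aemeasurable_fst
    exact AEMeasurable.iInf fun m => by fun_prop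
  · filter_upwards [hP] with ω h
    exact ⟨h.2.le, iInf_prod_range_one_sub_half_mul_le_one (hV ω · |>.2)⟩

/-- let `(u_j)_{j ≥ 0}` be i.i.d. `[0,1]`-valued random
variables with `E[u_0] > 0`.  Then the infinite product
`P = ∏_i (1 - ½ ∏_{j < i} (1 - u_j))` (the nonincreasing limit of its partial
products, each factor lying in `[1/2, 1]`) converges almost surely to a
strictly positive limit, and `E[P] > 0`. -/
theorem stmt18 {Ω : Type*} [MeasureSpace Ω] [IsProbabilityMeasure (ℙ : Measure Ω)]
    (u : ℕ → Ω → ℝ) (hmeas : ∀ j, Measurable (u j))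
    (hrange : ∀ j ω, u j ω ∈ Set.Icc (0 : ℝ) 1)
    (hindep : iIndepFun u ℙ)
    (hid : ∀ j, IdentDistrib (u j) (u 0) ℙ ℙ)
    (hpos : 0 < ∫ ω, u 0 ω) :
    (∀ᵐ ω ∂ℙ,
        Tendsto (fun m : ℕ =>
            ∏ i ∈ Finset.range m, (1 - 2⁻¹ * ∏ j ∈ Finset.range i, (1 - u j ω)))
          atTop
          (nhds (⨅ m : ℕ,
            ∏ i ∈ Finset.range m, (1 - 2⁻¹ * ∏ j ∈ Finset.range i, (1 - u j ω)))) ∧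
        0 < ⨅ m : ℕ,
          ∏ i ∈ Finset.range m, (1 - 2⁻¹ * ∏ j ∈ Finset.range i, (1 - u j ω))) ∧
      0 < ∫ ω, ⨅ m : ℕ,
        ∏ i ∈ Finset.range m, (1 - 2⁻¹ * ∏ j ∈ Finset.range i, (1 - u j ω)) :=
  stmt18_general u hrange hindep hid hpos
end

section
/- Fix n ∈ ℕ. Let V_1, …, V_n be i.i.d. uniform random variables on [0,1], and for each t > 0 let B_t : [0,1] → [0,1] be a random nondecreasing right-continuous function with B_t(1) = 1 such that (V_1,…,V_n) is independent of B_t, and define the generalized inverse B_t^{−1}(v) := inf{ x ∈ [0,1] : B_t(x) > v } (with inf ∅ = 1). Assume that sup_{x∈[0,1]} |B_t(x) − x| → 0 in probability as t ↓ 0. Then P( B_t^{−1}(V_1), …, B_t^{−1}(V_n) are pairwise distinct ) → 1 as t ↓ 0. -/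
/-!
If `sup |B_t - id| < δ` on `[0,1]`, then `|B_t⁻¹(v) - v| ≤ δ` for every `v ∈ [0,1]`, so a
collision `B_t⁻¹(V_i) = B_t⁻¹(V_j)` forces `|V_i - V_j| ≤ 2δ`. For independent `V_i`, `V_j` with
`V_j` uniform this has probability at most `4δ`, so a union bound over the `n²` pairs gives
`P(collision) ≤ P(sup |B_t - id| ≥ δ) + 4 n² δ`, whose first term vanishes as `t ↓ 0`.
-/

open MeasureTheory ProbabilityTheory Filter Set Topology
open scoped ENNReal

noncomputable def genInv (f : ℝ → ℝ) (v : ℝ) : ℝ :=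
  sInf (insert 1 {x ∈ Icc (0 : ℝ) 1 | v < f x})

section GenInv

variable {f : ℝ → ℝ} {δ v v' : ℝ}

lemma bddBelow_genInv_set : BddBelow (insert (1 : ℝ) {x ∈ Icc (0 : ℝ) 1 | v < f x}) :=
  ⟨0, by rintro b (rfl | hb); exacts [zero_le_one, hb.1.1]⟩

lemma nonneg_of_abs_sub_le (hf : ∀ x ∈ Icc (0 : ℝ) 1, |f x - x| ≤ δ) : 0 ≤ δ :=
  (abs_nonneg _).trans (hf 0 (left_mem_Icc.2 zero_le_one))

lemma sub_le_genInv (hf : ∀ x ∈ Icc (0 : ℝ) 1, |f x - x| ≤ δ) (hv : v ≤ 1) :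
    v - δ ≤ genInv f v := by
  refine le_csInf ⟨1, mem_insert _ _⟩ ?_
  rintro b (rfl | ⟨hb, hvb⟩)
  · linarith [nonneg_of_abs_sub_le hf]
  · linarith [(abs_le.mp (hf b hb)).2]

lemma genInv_le_add (hf : ∀ x ∈ Icc (0 : ℝ) 1, |f x - x| ≤ δ) (hv : 0 ≤ v) :
    genInv f v ≤ v + δ := by
  have hδ := nonneg_of_abs_sub_le hf
  refine le_of_forall_gt_imp_ge_of_dense fun y hy => ?_
  rcases le_or_gt 1 y with hy1 | hy1
  · exact (csInf_le bddBelow_genInv_set (mem_insert _ _)).trans hy1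
  · have hyI : y ∈ Icc (0 : ℝ) 1 := ⟨by linarith, hy1.le⟩
    refine csInf_le bddBelow_genInv_set (mem_insert_of_mem _ ⟨hyI, ?_⟩)
    linarith [(abs_le.mp (hf y hyI)).1]

lemma abs_genInv_sub_le (hf : ∀ x ∈ Icc (0 : ℝ) 1, |f x - x| ≤ δ) (hv : v ∈ Icc (0 : ℝ) 1) :
    |genInv f v - v| ≤ δ :=
  abs_sub_le_iff.2 ⟨by linarith [genInv_le_add hf hv.1], by linarith [sub_le_genInv hf hv.2]⟩

lemma abs_sub_le_of_genInv_eq (hf : ∀ x ∈ Icc (0 : ℝ) 1, |f x - x| ≤ δ)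
    (hv : v ∈ Icc (0 : ℝ) 1) (hv' : v' ∈ Icc (0 : ℝ) 1) (h : genInv f v = genInv f v') :
    |v - v'| ≤ 2 * δ := by
  have hv_close := abs_le.1 (abs_genInv_sub_le hf hv)
  have hv'_close := abs_le.1 (abs_genInv_sub_le hf hv')
  rw [h] at hv_close
  exact abs_le.2 ⟨by linarith, by linarith⟩

end GenInv

lemma abs_sub_lt_of_iSup_lt {f : ℝ → ℝ} {δ : ℝ} (hf : MapsTo f (Icc 0 1) (Icc 0 1))
    (h : ⨆ x : Icc (0 : ℝ) 1, |f x - x| < δ) : ∀ x ∈ Icc (0 : ℝ) 1, |f x - x| < δ := by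
  have hbdd : BddAbove (range fun x : Icc (0 : ℝ) 1 => |f x - x|) := by
    refine ⟨1, ?_⟩
    rintro _ ⟨x, rfl⟩
    have hfx := hf x.2
    exact abs_sub_le_iff.2 ⟨by linarith [hfx.2, x.2.1], by linarith [hfx.1, x.2.2]⟩
  exact fun x hx => (le_ciSup hbdd ⟨x, hx⟩).trans_lt h

lemma measure_abs_sub_le_le_of_indepFun {Ω : Type*} [MeasurableSpace Ω] {μ : Measure Ω}
    [IsProbabilityMeasure μ] {X Y : Ω → ℝ} (hX : Measurable X) (hY : Measurable Y)
    (hY_law : μ.map Y ≤ volume) (hXY : IndepFun X Y μ) (c : ℝ) :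
    μ {ω | |X ω - Y ω| ≤ c} ≤ ENNReal.ofReal (2 * c) := by
  have := Measure.isProbabilityMeasure_map (μ := μ) hX.aemeasurable
  set S : Set (ℝ × ℝ) := {p | |p.1 - p.2| ≤ c}
  have hS : MeasurableSet S := measurableSet_le (measurable_fst.sub measurable_snd).abs
    measurable_const
  have hslice (u : ℝ) : Prod.mk u ⁻¹' S = Icc (u - c) (u + c) := by
    ext v
    simp only [S, mem_preimage, mem_ofPred_eq, mem_Icc, abs_le]
    constructor <;> rintro ⟨h1, h2⟩ <;> constructor <;> linarith
  calc μ {ω | |X ω - Y ω| ≤ c} = (μ.map fun ω => (X ω, Y ω)) S := by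
        rw [Measure.map_apply (hX.prodMk hY) hS]; rfl
    _ = ∫⁻ u, μ.map Y (Icc (u - c) (u + c)) ∂(μ.map X) := by
        simp only [(indepFun_iff_map_prod_eq_prod_map_map hX.aemeasurable
          hY.aemeasurable).1 hXY, Measure.prod_apply hS, hslice]
    _ ≤ ∫⁻ _, ENNReal.ofReal (2 * c) ∂(μ.map X) := by
        refine lintegral_mono fun u => (hY_law _).trans ?_
        rw [Real.volume_Icc, show u + c - (u - c) = 2 * c by ring]
    _ = ENNReal.ofReal (2 * c) := by simp

lemma measure_not_injective_genInv_le {Ω : Type*} [MeasurableSpace Ω] {μ : Measure Ω}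
    [IsProbabilityMeasure μ] {n : ℕ} {V : Fin n → Ω → ℝ} (hV : ∀ i, Measurable (V i))
    (hindep : Pairwise fun i j => IndepFun (V i) (V j) μ)
    (hunif : ∀ i, μ.map (V i) = volume.restrict (Icc 0 1))
    {f : Ω → ℝ → ℝ} (hf : ∀ ω, MapsTo (f ω) (Icc 0 1) (Icc 0 1)) (δ : ℝ) :
    μ {ω | ¬ Function.Injective fun i => genInv (f ω) (V i ω)}
      ≤ μ {ω | δ ≤ ⨆ x : Icc (0 : ℝ) 1, |f ω x - x|} + (n * n : ℕ) * ENNReal.ofReal (4 * δ) := by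
  set close : Fin n × Fin n → Set Ω := fun p => {ω | p.1 ≠ p.2 ∧ |V p.1 ω - V p.2 ω| ≤ 2 * δ}
  have hV_mem : ∀ᵐ ω ∂μ, ∀ i, V i ω ∈ Icc (0 : ℝ) 1 := ae_all_iff.2 fun i =>
    ae_of_ae_map (hV i).aemeasurable (by rw [hunif i]; exact ae_restrict_mem measurableSet_Icc)
  have hsub : {ω | ¬ Function.Injective fun i => genInv (f ω) (V i ω)}
      ≤ᵐ[μ] ({ω | δ ≤ ⨆ x : Icc (0 : ℝ) 1, |f ω x - x|} ∪ ⋃ p, close p : Set Ω) := by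
    filter_upwards [hV_mem] with ω hω (hcoll : ¬ Function.Injective _)
    obtain ⟨i, j, heq, hne⟩ := Function.not_injective_iff.1 hcoll
    rcases le_or_gt δ (⨆ x : Icc (0 : ℝ) 1, |f ω x - x|) with hfar | hnear
    · exact Or.inl hfar
    · have hfδ x hx := (abs_sub_lt_of_iSup_lt (hf ω) hnear x hx).le
      exact Or.inr (mem_iUnion.2 ⟨(i, j), hne, abs_sub_le_of_genInv_eq hfδ (hω i) (hω j) heq⟩)
  have hclose (p : Fin n × Fin n) : μ (close p) ≤ ENNReal.ofReal (4 * δ) := by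
    by_cases hp : p.1 = p.2
    · simp [close, hp]
    · refine (measure_mono fun ω hω => hω.2).trans ?_
      refine (measure_abs_sub_le_le_of_indepFun (hV p.1) (hV p.2)
        ((hunif p.2).trans_le Measure.restrict_le_self) (hindep hp) (2 * δ)).trans_eq ?_
      ring_nf
  calc _ ≤ μ ({ω | δ ≤ ⨆ x : Icc (0 : ℝ) 1, |f ω x - x|} ∪ ⋃ p, close p) := measure_mono_ae hsub
    _ ≤ μ {ω | δ ≤ ⨆ x : Icc (0 : ℝ) 1, |f ω x - x|} + ∑ p, μ (close p) :=
        (measure_union_le _ _).trans (by gcongr; exact measure_iUnion_fintype_le _ _)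
    _ ≤ _ := by
        grw [Finset.sum_le_sum fun p _ => hclose p]
        simp

lemma tendsto_measure_of_tendsto_measure_compl {α ι : Type*} [MeasurableSpace α]
    {μ : Measure α} [IsProbabilityMeasure μ] {l : Filter ι} {s : ι → Set α}
    (h : Tendsto (fun i => μ (s i)ᶜ) l (𝓝 0)) : Tendsto (fun i => μ (s i)) l (𝓝 1) := by
  have hlower : Tendsto (fun i => 1 - μ (s i)ᶜ) l (𝓝 1) := by
    simpa using ENNReal.Tendsto.sub tendsto_const_nhds h (Or.inl ENNReal.one_ne_top)
  refine tendsto_of_tendsto_of_tendsto_of_le_of_le hlower tendsto_const_nhds (fun i => ?_)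
    fun i => prob_le_one
  rw [tsub_le_iff_right, ← measure_univ (μ := μ)]
  exact measure_univ_le_add_compl (s i)

theorem stmt19_general {Ω : Type*} [MeasureSpace Ω] [IsProbabilityMeasure (ℙ : Measure Ω)]
    (n : ℕ) (V : Fin n → Ω → ℝ)
    (hVmeas : ∀ i, Measurable (V i))
    (hViid : iIndepFun V ℙ)
    (hVunif : ∀ i, Measure.map (V i) ℙ = volume.restrict (Set.Icc (0 : ℝ) 1))
    (B : ℝ → Ω → ℝ → ℝ)
    (hBrange : ∀ t : ℝ, 0 < t → ∀ ω, ∀ x ∈ Set.Icc (0 : ℝ) 1, B t ω x ∈ Set.Icc (0 : ℝ) 1)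
    (hBconv : ∀ ε : ℝ, 0 < ε →
      Tendsto (fun t : ℝ => ℙ {ω | ε ≤ ⨆ x : Set.Icc (0 : ℝ) 1, |B t ω x - x|})
        (nhdsWithin 0 (Set.Ioi 0)) (nhds 0)) :
    Tendsto (fun t : ℝ => ℙ {ω | Function.Injective fun i : Fin n =>
        sInf (insert (1 : ℝ) {x ∈ Set.Icc (0 : ℝ) 1 | V i ω < B t ω x})})
      (nhdsWithin 0 (Set.Ioi 0)) (nhds 1) := by
  refine tendsto_measure_of_tendsto_measure_compl (ENNReal.tendsto_nhds_zero.2 fun ε hε => ?_)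
  have hpairs : Tendsto (fun δ : ℝ => ((n * n : ℕ) : ℝ≥0∞) * ENNReal.ofReal (4 * δ))
      (𝓝[>] 0) (𝓝 0) := by
    have h4 : Tendsto (fun δ : ℝ => 4 * δ) (𝓝[>] 0) (𝓝 0) := by
      simpa using ((tendsto_id (x := 𝓝 (0 : ℝ))).const_mul 4).mono_left nhdsWithin_le_nhds
    simpa using ENNReal.Tendsto.const_mul (ENNReal.tendsto_ofReal h4)
      (Or.inr (ENNReal.natCast_ne_top (n * n)))
  obtain ⟨δ, hδε, hδ⟩ :=
    ((hpairs.eventually (eventually_le_nhds (ENNReal.half_pos hε.ne'))).and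
      self_mem_nhdsWithin).exists
  filter_upwards [ENNReal.tendsto_nhds_zero.1 (hBconv δ hδ) _ (ENNReal.half_pos hε.ne'),
    self_mem_nhdsWithin] with t hfar ht
  calc _ ≤ _ := measure_not_injective_genInv_le hVmeas (fun _ _ => hViid.indepFun)
        hVunif (hBrange t ht) δ
    _ ≤ ε / 2 + ε / 2 := add_le_add hfar hδε
    _ = ε := ENNReal.add_halves ε

/-- let `V_1, …, V_n` be i.i.d. uniform-`[0,1]` random
variables and, for each `t > 0`, let `B_t : [0,1] → [0,1]` be a random
nondecreasing right-continuous function with `B_t(1) = 1`, independent of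
`(V_1, …, V_n)`.  If `sup_{x ∈ [0,1]} |B_t(x) - x| → 0` in probability as
`t ↓ 0`, then `P(B_t^{-1}(V_1), …, B_t^{-1}(V_n)` pairwise distinct`) → 1` as
`t ↓ 0`, where `B_t^{-1}(v) = inf {x ∈ [0,1] : B_t(x) > v}` (with `inf ∅ = 1`). -/
theorem stmt19 {Ω : Type*} [MeasureSpace Ω] [IsProbabilityMeasure (ℙ : Measure Ω)]
    (n : ℕ) (V : Fin n → Ω → ℝ)
    (hVmeas : ∀ i, Measurable (V i))
    (hViid : iIndepFun V ℙ)
    (hVunif : ∀ i, Measure.map (V i) ℙ = volume.restrict (Set.Icc (0 : ℝ) 1))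
    (B : ℝ → Ω → ℝ → ℝ)
    (hBmeas : ∀ t : ℝ, 0 < t → ∀ x : ℝ, Measurable fun ω => B t ω x)
    (hBmono : ∀ t : ℝ, 0 < t → ∀ ω, ∀ x ∈ Set.Icc (0 : ℝ) 1, ∀ y ∈ Set.Icc (0 : ℝ) 1,
      x ≤ y → B t ω x ≤ B t ω y)
    (hBrc : ∀ t : ℝ, 0 < t → ∀ ω, ∀ x ∈ Set.Ico (0 : ℝ) 1,
      ContinuousWithinAt (B t ω) (Set.Ici x) x)
    (hBone : ∀ t : ℝ, 0 < t → ∀ ω, B t ω 1 = 1)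
    (hBrange : ∀ t : ℝ, 0 < t → ∀ ω, ∀ x ∈ Set.Icc (0 : ℝ) 1, B t ω x ∈ Set.Icc (0 : ℝ) 1)
    (hBindep : ∀ t : ℝ, 0 < t →
      IndepFun (fun ω => (fun i : Fin n => V i ω)) (fun ω => B t ω) ℙ)
    (hBconv : ∀ ε : ℝ, 0 < ε →
      Tendsto (fun t : ℝ => ℙ {ω | ε ≤ ⨆ x : Set.Icc (0 : ℝ) 1, |B t ω x - x|})
        (nhdsWithin 0 (Set.Ioi 0)) (nhds 0)) :
    Tendsto (fun t : ℝ => ℙ {ω | Function.Injective fun i : Fin n =>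
        sInf (insert (1 : ℝ) {x ∈ Set.Icc (0 : ℝ) 1 | V i ω < B t ω x})})
      (nhdsWithin 0 (Set.Ioi 0)) (nhds 1) :=
  stmt19_general n V hVmeas hViid hVunif B hBrange hBconv
end
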